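/- Let W be a nonnegative real random variable with 0<E[W]<∞ and E[W²]<∞, let q≥3 be an integer, fix B=0, and assume there exists t_*>0 such that 𝓕_0''(t)>0 for 0<t<t_* and 𝓕_0''(t)<0 for t>t_*, where 𝓕_0(t)=E[(W/E[W])·(e^{tW}−1)/(e^{tW}+q−1)]. Then there exist β_0∈(0,∞) and β_1∈(β_0,∞) such that, writing β'=e^β−1, the stationarity equation E[(W/E[W])·(e^{β'Ws}−1)/(e^{β'Ws}+q−1)] = s has, among s∈[0,1]: only the trivial solution s_1(β,0)=0 when β∈(0,β_0); exactly three solutions s_1(β,0)=0 < s_2(β,0) < s_3(β,0) when β∈(β_0,β_1); and exactly two solutions s_1(β,0)=0 < s_3(β,0) when β>β_1. -/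

import Mathlib

/-! A positive solution `s` of the stationarity equation corresponds to `t = β' s > 0` with
`𝓕_0(t) / t = 1 / β'`, and then `s = 𝓕_0(t)`. As `𝓕_0(0) = 0`, the derivative of the slope
`𝓕_0(t) / t` has the sign of `t 𝓕_0'(t) - 𝓕_0(t)`, which the convex-concave shape of `𝓕_0` makes
positive up to some `t₀ > t⋆` and negative afterwards. So the slope increases from `𝓕_0'(0)` to its
maximum `M` at `t₀` and then decreases to `0`: the level `1 / β'` is attained twice when it lies
between `𝓕_0'(0)` and `M`, once when it lies below `𝓕_0'(0)` and never above `M`. This gives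
`β₀ = log (1 + 1 / M)` and `β₁ = log (1 + 1 / 𝓕_0'(0))`. -/

open MeasureTheory Filter Topology Set

/-- The function `𝓕_0(t) = E[(W/E[W])·(e^{tW}−1)/(e^{tW}+q−1)]`. -/
noncomputable def Ffun {Ω : Type*} [MeasurableSpace Ω] (μ : Measure Ω)
    (W : Ω → ℝ) (q : ℕ) (t : ℝ) : ℝ :=
  ∫ ω, (W ω / (∫ ω', W ω' ∂μ)) * (Real.exp (t * W ω) - 1) /
    (Real.exp (t * W ω) + q - 1) ∂μ

/-- The stationarity equation `E[(W/E[W])·(e^{β'Ws}−1)/(e^{β'Ws}+q−1)] = s`, `β'=e^β−1`. -/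
def statEq {Ω : Type*} [MeasurableSpace Ω] (μ : Measure Ω)
    (W : Ω → ℝ) (q : ℕ) (β : ℝ) (s : ℝ) : Prop :=
  (∫ ω, (W ω / (∫ ω', W ω' ∂μ)) * (Real.exp ((Real.exp β - 1) * W ω * s) - 1) /
    (Real.exp ((Real.exp β - 1) * W ω * s) + q - 1) ∂μ) = s

noncomputable def expRatio (c x : ℝ) : ℝ := (Real.exp x - 1) / (Real.exp x + c)

noncomputable def expRatioDeriv (c x : ℝ) : ℝ := (1 + c) * Real.exp x / (Real.exp x + c) ^ 2

section expRatio

variable {c : ℝ}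

lemma hasDerivAt_expRatio (hc : 0 < c) (x : ℝ) :
    HasDerivAt (expRatio c) (expRatioDeriv c x) x := by
  have hd : Real.exp x + c ≠ 0 := by positivity
  refine (((Real.hasDerivAt_exp x).sub_const 1).div ((Real.hasDerivAt_exp x).add_const c)
    hd).congr_deriv ?_
  unfold expRatioDeriv
  ring

lemma continuous_expRatio (hc : 0 < c) : Continuous (expRatio c) :=
  continuous_iff_continuousAt.2 fun x => (hasDerivAt_expRatio hc x).continuousAt

lemma continuous_expRatioDeriv (hc : 0 < c) : Continuous (expRatioDeriv c) :=
  (continuous_const.mul Real.continuous_exp).div (by fun_prop) fun x => by positivity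

lemma expRatioDeriv_pos (hc : 0 < c) (x : ℝ) : 0 < expRatioDeriv c x := by
  have : 0 < 1 + c := by linarith
  unfold expRatioDeriv
  positivity

lemma abs_expRatio_le_one (hc : 1 ≤ c) (x : ℝ) : |expRatio c x| ≤ 1 := by
  have := Real.exp_pos x
  rw [expRatio, abs_div, abs_of_pos (by positivity : 0 < Real.exp x + c),
    div_le_one (by positivity), abs_le]
  constructor <;> linarith

-- `(e^x + c)² ≥ 4 c e^x ≥ (1 + c) e^x` as soon as `c ≥ 1/3`.
lemma abs_expRatioDeriv_le_one (hc : 1 ≤ c) (x : ℝ) : |expRatioDeriv c x| ≤ 1 := by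
  have := Real.exp_pos x
  rw [abs_of_pos (expRatioDeriv_pos (by linarith) x), expRatioDeriv, div_le_one (by positivity)]
  nlinarith [sq_nonneg (Real.exp x - c)]

end expRatio

structure IsUnimodal (φ : ℝ → ℝ) (t₀ : ℝ) : Prop where
  pos : 0 < t₀
  continuousOn : ContinuousOn φ (Ioi 0)
  strictMonoOn : StrictMonoOn φ (Ioc 0 t₀)
  strictAntiOn : StrictAntiOn φ (Ici t₀)

namespace IsUnimodal

variable {φ : ℝ → ℝ} {t₀ A y : ℝ}

lemma le_apply_peak (h : IsUnimodal φ t₀) {t : ℝ} (ht : 0 < t) : φ t ≤ φ t₀ := by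
  rcases le_or_gt t t₀ with htt₀ | htt₀
  · exact h.strictMonoOn.monotoneOn ⟨ht, htt₀⟩ ⟨h.pos, le_rfl⟩ htt₀
  · exact (h.strictAntiOn (mem_Ici.2 le_rfl) (mem_Ici.2 htt₀.le) htt₀).le

lemma lt_apply_of_le_peak (h : IsUnimodal φ t₀) (hA : Tendsto φ (𝓝[>] 0) (𝓝 A)) {t : ℝ} (ht : 0 < t)
    (htt₀ : t ≤ t₀) : A < φ t := by
  have hmid : 0 < t / 2 := by positivity
  have hA_le : A ≤ φ (t / 2) :=
    le_of_tendsto hA <| mem_of_superset (Ioo_mem_nhdsGT hmid) fun s hs =>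
      (h.strictMonoOn ⟨hs.1, by linarith [hs.2]⟩ ⟨hmid, by linarith⟩ hs.2).le
  exact hA_le.trans_lt (h.strictMonoOn ⟨hmid, by linarith⟩ ⟨ht, htt₀⟩ (by linarith))

lemma exists_lt_peak_apply_eq (h : IsUnimodal φ t₀) (hA : Tendsto φ (𝓝[>] 0) (𝓝 A))
    (hAy : A < y) (hy : y < φ t₀) : ∃ t ∈ Ioo 0 t₀, φ t = y := by
  obtain ⟨a, hay, ha⟩ := ((hA.eventually_lt_const hAy).and (Ioo_mem_nhdsGT h.pos)).exists
  obtain ⟨t, ht, hφt⟩ := intermediate_value_Ioo ha.2.le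
    (h.continuousOn.mono fun x hx => ha.1.trans_le hx.1) ⟨hay, hy⟩
  exact ⟨t, ⟨ha.1.trans ht.1, ht.2⟩, hφt⟩

lemma exists_gt_peak_apply_eq (h : IsUnimodal φ t₀) (h0 : Tendsto φ atTop (𝓝 0))
    (hy0 : 0 < y) (hy : y < φ t₀) : ∃ t ∈ Ioi t₀, φ t = y := by
  obtain ⟨X, hXy, hX⟩ := ((h0.eventually_lt_const hy0).and (eventually_gt_atTop t₀)).exists
  obtain ⟨t, ht, hφt⟩ := intermediate_value_Ioo' hX.le
    (h.continuousOn.mono fun x hx => h.pos.trans_le hx.1) ⟨hXy, hy⟩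
  exact ⟨t, ht.1, hφt⟩

lemma setOf_apply_eq_eq_empty (h : IsUnimodal φ t₀) (hy : φ t₀ < y) :
    {t | 0 < t ∧ φ t = y} = ∅ :=
  eq_empty_of_forall_notMem fun _ ⟨ht, hφt⟩ => (h.le_apply_peak ht).not_gt (hφt ▸ hy)

lemma exists_setOf_apply_eq_eq_pair (h : IsUnimodal φ t₀) (hA : Tendsto φ (𝓝[>] 0) (𝓝 A))
    (h0 : Tendsto φ atTop (𝓝 0)) (hA0 : 0 < A) (hAy : A < y) (hy : y < φ t₀) :
    ∃ t₂ t₃, 0 < t₂ ∧ t₂ < t₃ ∧ {t | 0 < t ∧ φ t = y} = {t₂, t₃} := by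
  obtain ⟨t₂, ht₂, hφt₂⟩ := h.exists_lt_peak_apply_eq hA hAy hy
  obtain ⟨t₃, ht₃, hφt₃⟩ := h.exists_gt_peak_apply_eq h0 (hA0.trans hAy) hy
  refine ⟨t₂, t₃, ht₂.1, ht₂.2.trans ht₃, Set.ext fun t => ⟨?_, ?_⟩⟩
  · rintro ⟨ht, hφt⟩
    rcases le_or_gt t t₀ with htt₀ | htt₀
    · exact Or.inl <| h.strictMonoOn.injOn ⟨ht, htt₀⟩ ⟨ht₂.1, ht₂.2.le⟩ (hφt.trans hφt₂.symm)
    · exact Or.inr <| h.strictAntiOn.injOn (mem_Ici.2 htt₀.le) (mem_Ici.2 (le_of_lt ht₃))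
        (hφt.trans hφt₃.symm)
  · rintro (rfl | rfl)
    exacts [⟨ht₂.1, hφt₂⟩, ⟨h.pos.trans ht₃, hφt₃⟩]

lemma exists_setOf_apply_eq_eq_singleton (h : IsUnimodal φ t₀)
    (hA : Tendsto φ (𝓝[>] 0) (𝓝 A)) (h0 : Tendsto φ atTop (𝓝 0)) (hy0 : 0 < y) (hyA : y < A) :
    ∃ t₃, 0 < t₃ ∧ {t | 0 < t ∧ φ t = y} = {t₃} := by
  obtain ⟨t₃, ht₃, hφt₃⟩ :=
    h.exists_gt_peak_apply_eq h0 hy0 (hyA.trans (h.lt_apply_of_le_peak hA h.pos le_rfl))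
  refine ⟨t₃, h.pos.trans ht₃, Set.ext fun t => ⟨?_, ?_⟩⟩
  · rintro ⟨ht, hφt⟩
    rcases le_or_gt t t₀ with htt₀ | htt₀
    · exact absurd (hφt ▸ h.lt_apply_of_le_peak hA ht htt₀) hyA.not_gt
    · exact h.strictAntiOn.injOn (mem_Ici.2 htt₀.le) (mem_Ici.2 (le_of_lt ht₃))
        (hφt.trans hφt₃.symm)
  · rintro rfl
    exact ⟨h.pos.trans ht₃, hφt₃⟩

end IsUnimodal

section slope

variable {F F' : ℝ → ℝ}

lemma mul_deriv_lt_sub_lt_mul_deriv (hF : ∀ t, HasDerivAt F (F' t) t) {a b : ℝ} (hab : a < b)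
    (hmono : StrictMonoOn F' (Icc a b)) :
    (b - a) * F' a < F b - F a ∧ F b - F a < (b - a) * F' b := by
  obtain ⟨ξ, hξ, hslope⟩ := exists_hasDerivAt_eq_slope F F' hab
    (fun t _ => (hF t).continuousAt.continuousWithinAt) fun t _ => hF t
  have hF_sub : F b - F a = (b - a) * F' ξ := by
    rw [hslope]
    field_simp [(sub_pos.2 hab).ne']
  rw [hF_sub]
  have hξ' := Ioo_subset_Icc_self hξ
  exact ⟨mul_lt_mul_of_pos_left (hmono ⟨le_rfl, hab.le⟩ hξ' hξ.1) (sub_pos.2 hab),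
    mul_lt_mul_of_pos_left (hmono hξ' ⟨hab.le, le_rfl⟩ hξ.2) (sub_pos.2 hab)⟩

lemma hasDerivAt_div_id (hF : ∀ t, HasDerivAt F (F' t) t) {t : ℝ} (ht : t ≠ 0) :
    HasDerivAt (fun t => F t / t) ((t * F' t - F t) / t ^ 2) t := by
  refine ((hF t).div (hasDerivAt_id t) ht).congr_deriv ?_
  simp only [id]
  ring

lemma continuousOn_div_id (hF : ∀ t, HasDerivAt F (F' t) t) :
    ContinuousOn (fun t => F t / t) (Ioi 0) :=
  fun _ ht => (hasDerivAt_div_id hF (ne_of_gt ht)).continuousAt.continuousWithinAt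

lemma tendsto_div_id_nhdsGT_zero (hF : HasDerivAt F (F' 0) 0) (hF0 : F 0 = 0) :
    Tendsto (fun t => F t / t) (𝓝[>] 0) (𝓝 (F' 0)) := by
  simpa [hF0, div_eq_inv_mul] using hF.tendsto_slope_zero_right

lemma tendsto_div_id_atTop_zero (hF : ∀ t, |F t| ≤ 1) :
    Tendsto (fun t => F t / t) atTop (𝓝 0) := by
  simpa [div_eq_mul_inv] using isBoundedUnder_le_mul_tendsto_zero
    (isBoundedUnder_of ⟨1, fun t => (Real.norm_eq_abs (F t)).trans_le (hF t)⟩)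
    tendsto_inv_atTop_zero

lemma isUnimodal_div_id_of_sign (hF : ∀ t, HasDerivAt F (F' t) t) {t₀ : ℝ} (ht₀ : 0 < t₀)
    (hpos : ∀ t ∈ Ioo 0 t₀, 0 < t * F' t - F t) (hneg : ∀ t ∈ Ioi t₀, t * F' t - F t < 0) :
    IsUnimodal (fun t => F t / t) t₀ := by
  refine ⟨ht₀, continuousOn_div_id hF, ?_, ?_⟩
  · refine strictMonoOn_of_deriv_pos (convex_Ioc 0 t₀)
      ((continuousOn_div_id hF).mono fun t ht => ht.1) fun t ht => ?_
    rw [interior_Ioc] at ht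
    rw [(hasDerivAt_div_id hF ht.1.ne').deriv]
    exact div_pos (hpos t ht) (pow_pos ht.1 2)
  · refine strictAntiOn_of_deriv_neg (convex_Ici t₀)
      ((continuousOn_div_id hF).mono fun t ht => ht₀.trans_le ht) fun t ht => ?_
    rw [interior_Ici] at ht
    rw [(hasDerivAt_div_id hF (ht₀.trans ht).ne').deriv]
    exact div_neg_of_neg_of_pos (hneg t ht) (pow_pos (ht₀.trans ht) 2)

lemma strictAntiOn_mul_deriv_sub (hF : ∀ t, HasDerivAt F (F' t) t) {tstar : ℝ}
    (htstar : 0 < tstar) (hanti : StrictAntiOn F' (Ici tstar)) :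
    StrictAntiOn (fun t => t * F' t - F t) (Ici tstar) := fun t₁ ht₁ t₂ ht₂ h₁₂ => by
  have hF'₁₂ : F' t₂ < F' t₁ := hanti ht₁ ht₂ h₁₂
  have hF₁₂ := (mul_deriv_lt_sub_lt_mul_deriv (F := fun t => -F t) (F' := fun t => -F' t)
    (fun t => (hF t).neg) h₁₂ fun x hx y hy hxy =>
      neg_lt_neg (hanti (le_trans ht₁ hx.1) (le_trans ht₁ hy.1) hxy)).2
  nlinarith [mul_pos (htstar.trans_le (mem_Ici.1 ht₁)) (sub_pos.2 hF'₁₂)]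

-- Otherwise the slope `F t / t` would be nondecreasing on `[t⋆, ∞)` while tending to `0`,
-- although `F t⋆ > t⋆ F' 0 > 0`.
lemma exists_mul_deriv_sub_neg (hF : ∀ t, HasDerivAt F (F' t) t) {tstar : ℝ} (htstar : 0 < tstar)
    (hF0 : F 0 = 0) (hF'0 : 0 < F' 0) (hmono : StrictMonoOn F' (Icc 0 tstar))
    (hlim : Tendsto (fun t => F t / t) atTop (𝓝 0)) :
    ∃ T, tstar ≤ T ∧ T * F' T - F T < 0 := by
  by_contra! hg
  have hmono_div : MonotoneOn (fun t => F t / t) (Ici tstar) := by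
    refine monotoneOn_of_deriv_nonneg (convex_Ici tstar)
      ((continuousOn_div_id hF).mono fun t ht => htstar.trans_le ht) ?_ ?_ <;> rw [interior_Ici]
    · exact fun t ht =>
        (hasDerivAt_div_id hF (htstar.trans ht).ne').differentiableAt.differentiableWithinAt
    · intro t ht
      rw [(hasDerivAt_div_id hF (htstar.trans ht).ne').deriv]
      exact div_nonneg (hg t ht.le) (sq_nonneg t)
  have hle : F tstar / tstar ≤ 0 := ge_of_tendsto hlim <|
    (eventually_ge_atTop tstar).mono fun t ht => hmono_div (mem_Ici.2 le_rfl) ht ht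
  have hpos := (mul_deriv_lt_sub_lt_mul_deriv hF htstar hmono).1
  rw [hF0, sub_zero, sub_zero] at hpos
  exact hle.not_gt (div_pos (by nlinarith) htstar)

theorem exists_isUnimodal_div_id {tstar : ℝ} (htstar : 0 < tstar)
    (hF : ∀ t, HasDerivAt F (F' t) t) (hF' : Continuous F') (hF0 : F 0 = 0) (hF'0 : 0 < F' 0)
    (hconvex : ∀ t ∈ Ioo 0 tstar, 0 < deriv F' t) (hconcave : ∀ t ∈ Ioi tstar, deriv F' t < 0)
    (hlim : Tendsto (fun t => F t / t) atTop (𝓝 0)) :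
    ∃ t₀, IsUnimodal (fun t => F t / t) t₀ := by
  have hmono : StrictMonoOn F' (Icc 0 tstar) :=
    strictMonoOn_of_deriv_pos (convex_Icc 0 tstar) hF'.continuousOn
      (by simpa only [interior_Icc] using hconvex)
  have hanti : StrictAntiOn F' (Ici tstar) :=
    strictAntiOn_of_deriv_neg (convex_Ici tstar) hF'.continuousOn
      (by simpa only [interior_Ici] using hconcave)
  have hg_pos : ∀ t ∈ Ioc 0 tstar, 0 < t * F' t - F t := fun t ht => by
    have := (mul_deriv_lt_sub_lt_mul_deriv hF ht.1 (hmono.mono (Icc_subset_Icc le_rfl ht.2))).2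
    linarith [hF0]
  have hg_anti := strictAntiOn_mul_deriv_sub hF htstar hanti
  obtain ⟨T, hT, hgT⟩ := exists_mul_deriv_sub_neg hF htstar hF0 hF'0 hmono hlim
  have hg_cont : Continuous fun t => t * F' t - F t :=
    (continuous_id.mul hF').sub (continuous_iff_continuousAt.2 fun t => (hF t).continuousAt)
  obtain ⟨t₀, ht₀, hgt₀⟩ := intermediate_value_Ioo' hT hg_cont.continuousOn
    ⟨hgT, hg_pos tstar ⟨htstar, le_rfl⟩⟩
  refine ⟨t₀, isUnimodal_div_id_of_sign hF (htstar.trans ht₀.1) (fun t ht => ?_) fun t ht => ?_⟩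
  · rcases le_or_gt t tstar with h | h
    · exact hg_pos t ⟨ht.1, h⟩
    · exact hgt₀ ▸ hg_anti (mem_Ici.2 h.le) (mem_Ici.2 ht₀.1.le) ht.2
  · exact hgt₀ ▸ hg_anti (mem_Ici.2 ht₀.1.le) (mem_Ici.2 (ht₀.1.trans ht).le) ht

end slope

lemma setOf_apply_mul_eq_self {F : ℝ → ℝ} (hF0 : F 0 = 0) (hF1 : ∀ t, F t ≤ 1) {b : ℝ}
    (hb : 0 < b) :
    {s | s ∈ Icc (0 : ℝ) 1 ∧ F (b * s) = s} =
      insert 0 ((· / b) '' {t | 0 < t ∧ F t / t = b⁻¹}) := by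
  ext s
  constructor
  · rintro ⟨⟨hs0, -⟩, hFs⟩
    rcases hs0.eq_or_lt with rfl | hs
    · exact Or.inl rfl
    · refine Or.inr ⟨b * s, ⟨by positivity, ?_⟩, by field_simp⟩
      rw [hFs]
      field_simp
  · rintro (rfl | ⟨t, ⟨ht, hFt⟩, rfl⟩)
    · simp [hF0]
    · have hFt' : F t = t / b := by
        rw [div_eq_iff ht.ne'] at hFt
        rw [hFt, div_eq_inv_mul]
      refine ⟨⟨by positivity, show t / b ≤ 1 from hFt' ▸ hF1 t⟩, ?_⟩
      rw [mul_div_cancel₀ t hb.ne', hFt']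

lemma inv_exp_sub_one_lt_iff {β c : ℝ} (hβ : 0 < β) (hc : 0 < c) :
    (Real.exp β - 1)⁻¹ < c ↔ Real.log (1 + c⁻¹) < β := by
  rw [inv_lt_comm₀ (sub_pos.2 (Real.one_lt_exp_iff.2 hβ)) hc,
    Real.log_lt_iff_lt_exp (by positivity)]
  constructor <;> intro h <;> linarith

lemma lt_inv_exp_sub_one_iff {β c : ℝ} (hβ : 0 < β) (hc : 0 < c) :
    c < (Real.exp β - 1)⁻¹ ↔ β < Real.log (1 + c⁻¹) := by
  rw [lt_inv_comm₀ hc (sub_pos.2 (Real.one_lt_exp_iff.2 hβ)),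
    Real.lt_log_iff_exp_lt (by positivity)]
  constructor <;> intro h <;> linarith

lemma norm_mul_le_of_abs_le_one {a r : ℝ} (ha : 0 ≤ a) (hr : |r| ≤ 1) : ‖a * r‖ ≤ a := by
  rw [norm_mul, Real.norm_of_nonneg ha]
  exact mul_le_of_le_one_right ha hr

noncomputable def FfunDeriv {Ω : Type*} [MeasurableSpace Ω] (μ : Measure Ω) (W : Ω → ℝ) (q : ℕ)
    (t : ℝ) : ℝ :=
  ∫ ω, W ω ^ 2 / (∫ ω', W ω' ∂μ) * expRatioDeriv ((q : ℝ) - 1) (t * W ω) ∂μ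

section Ffun

variable {Ω : Type*} [MeasurableSpace Ω] {μ : Measure Ω} {W : Ω → ℝ} {q : ℕ}

lemma one_le_cast_sub_one (hq : 2 ≤ q) : (1 : ℝ) ≤ q - 1 := by
  have : (2 : ℝ) ≤ q := by exact_mod_cast hq
  linarith

lemma Ffun_eq_integral_expRatio (t : ℝ) :
    Ffun μ W q t = ∫ ω, W ω / (∫ ω', W ω' ∂μ) * expRatio ((q : ℝ) - 1) (t * W ω) ∂μ := by
  simp only [Ffun, expRatio, mul_div_assoc, add_sub_assoc]

lemma Ffun_zero : Ffun μ W q 0 = 0 := by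
  simp [Ffun]

lemma aestronglyMeasurable_mul_comp_mul {a f : ℝ → ℝ} (ha : Continuous a) (hf : Continuous f)
    (hWmeas : Measurable W) (t : ℝ) :
    AEStronglyMeasurable (fun ω => a (W ω) * f (t * W ω)) μ :=
  ((ha.measurable.comp hWmeas).mul
    (hf.measurable.comp (measurable_const.mul hWmeas))).aestronglyMeasurable

lemma abs_Ffun_le_one (hWnn : ∀ ω, 0 ≤ W ω) (hWint : Integrable W μ) (hEW : 0 < ∫ ω, W ω ∂μ)
    (hq : 2 ≤ q) (t : ℝ) : |Ffun μ W q t| ≤ 1 := by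
  rw [Ffun_eq_integral_expRatio, ← Real.norm_eq_abs]
  calc _ ≤ ∫ ω, W ω / ∫ ω', W ω' ∂μ ∂μ :=
        norm_integral_le_of_norm_le (hWint.div_const _) (ae_of_all _ fun ω =>
          norm_mul_le_of_abs_le_one (div_nonneg (hWnn ω) hEW.le)
            (abs_expRatio_le_one (one_le_cast_sub_one hq) _))
    _ = 1 := by rw [integral_div, div_self hEW.ne']

lemma integrable_sq_div_mul_expRatioDeriv (hWmeas : Measurable W) (hEW : 0 < ∫ ω, W ω ∂μ)
    (hW2 : Integrable (fun ω => W ω ^ 2) μ) (hq : 2 ≤ q) (t : ℝ) :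
    Integrable (fun ω => W ω ^ 2 / (∫ ω', W ω' ∂μ) * expRatioDeriv ((q : ℝ) - 1) (t * W ω)) μ :=
  (hW2.div_const _).mono' (aestronglyMeasurable_mul_comp_mul ((continuous_pow 2).div_const _)
    (continuous_expRatioDeriv (by linarith [one_le_cast_sub_one hq])) hWmeas t)
    (ae_of_all _ fun _ => norm_mul_le_of_abs_le_one (by positivity)
      (abs_expRatioDeriv_le_one (one_le_cast_sub_one hq) _))

lemma hasDerivAt_Ffun (hWmeas : Measurable W) (hWnn : ∀ ω, 0 ≤ W ω) (hWint : Integrable W μ)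
    (hEW : 0 < ∫ ω, W ω ∂μ) (hW2 : Integrable (fun ω => W ω ^ 2) μ) (hq : 2 ≤ q) (t : ℝ) :
    HasDerivAt (Ffun μ W q) (FfunDeriv μ W q t) t := by
  have hc := one_le_cast_sub_one hq
  have hc0 : (0 : ℝ) < q - 1 := by linarith
  set E := ∫ ω', W ω' ∂μ
  have hmeas := aestronglyMeasurable_mul_comp_mul (μ := μ) (continuous_id.div_const E)
    (continuous_expRatio hc0) hWmeas
  have hint : Integrable (fun ω => W ω / E * expRatio ((q : ℝ) - 1) (t * W ω)) μ :=
    (hWint.div_const E).mono' (hmeas t) (ae_of_all _ fun ω =>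
      norm_mul_le_of_abs_le_one (div_nonneg (hWnn ω) hEW.le) (abs_expRatio_le_one hc _))
  rw [show Ffun μ W q = _ from funext Ffun_eq_integral_expRatio]
  refine (hasDerivAt_integral_of_dominated_loc_of_deriv_le (bound := fun ω => W ω ^ 2 / E)
    (F' := fun s ω => W ω ^ 2 / E * expRatioDeriv ((q : ℝ) - 1) (s * W ω)) univ_mem
    (Eventually.of_forall hmeas) hint
    (integrable_sq_div_mul_expRatioDeriv hWmeas hEW hW2 hq t).aestronglyMeasurable ?_
    (hW2.div_const E) ?_).2
  · exact ae_of_all _ fun ω s _ =>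
      norm_mul_le_of_abs_le_one (by positivity) (abs_expRatioDeriv_le_one hc _)
  · refine ae_of_all _ fun ω s _ => ?_
    refine (((hasDerivAt_expRatio hc0 (s * W ω)).comp s
      ((hasDerivAt_id s).mul_const (W ω))).const_mul (W ω / E)).congr_deriv ?_
    ring

lemma deriv_Ffun (hWmeas : Measurable W) (hWnn : ∀ ω, 0 ≤ W ω) (hWint : Integrable W μ)
    (hEW : 0 < ∫ ω, W ω ∂μ) (hW2 : Integrable (fun ω => W ω ^ 2) μ) (hq : 2 ≤ q) :
    deriv (Ffun μ W q) = FfunDeriv μ W q :=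
  funext fun t => (hasDerivAt_Ffun hWmeas hWnn hWint hEW hW2 hq t).deriv

lemma continuous_FfunDeriv (hWmeas : Measurable W) (hEW : 0 < ∫ ω, W ω ∂μ)
    (hW2 : Integrable (fun ω => W ω ^ 2) μ) (hq : 2 ≤ q) : Continuous (FfunDeriv μ W q) := by
  have hc := one_le_cast_sub_one hq
  have hc0 : (0 : ℝ) < q - 1 := by linarith
  refine continuous_of_dominated (bound := fun ω => W ω ^ 2 / ∫ ω', W ω' ∂μ)
    (fun t => (integrable_sq_div_mul_expRatioDeriv hWmeas hEW hW2 hq t).aestronglyMeasurable)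
    (fun t => ae_of_all _ fun ω =>
      norm_mul_le_of_abs_le_one (by positivity) (abs_expRatioDeriv_le_one hc _))
    (hW2.div_const _) (ae_of_all _ fun ω => ?_)
  have := continuous_expRatioDeriv hc0
  fun_prop

lemma FfunDeriv_pos (hWmeas : Measurable W) (hWnn : ∀ ω, 0 ≤ W ω) (hWint : Integrable W μ)
    (hEW : 0 < ∫ ω, W ω ∂μ) (hW2 : Integrable (fun ω => W ω ^ 2) μ) (hq : 2 ≤ q) (t : ℝ) :
    0 < FfunDeriv μ W q t := by
  have hr := expRatioDeriv_pos (c := (q : ℝ) - 1) (by linarith [one_le_cast_sub_one hq])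
  have hnn : 0 ≤ fun ω => W ω ^ 2 / (∫ ω', W ω' ∂μ) * expRatioDeriv ((q : ℝ) - 1) (t * W ω) :=
    fun ω => by have := hr (t * W ω); positivity
  have hsupp : Function.support (fun ω => W ω ^ 2 / (∫ ω', W ω' ∂μ) *
      expRatioDeriv ((q : ℝ) - 1) (t * W ω)) = Function.support W := by
    ext ω
    simp [(hr _).ne', hEW.ne']
  rw [FfunDeriv, integral_pos_iff_support_of_nonneg hnn
    (integrable_sq_div_mul_expRatioDeriv hWmeas hEW hW2 hq t), hsupp,
    ← integral_pos_iff_support_of_nonneg hWnn hWint]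
  exact hEW

lemma statEq_iff (β s : ℝ) :
    statEq μ W q β s ↔ Ffun μ W q ((Real.exp β - 1) * s) = s := by
  simp only [statEq, Ffun, mul_right_comm _ _ s]

lemma setOf_statEq_eq (hWnn : ∀ ω, 0 ≤ W ω) (hWint : Integrable W μ) (hEW : 0 < ∫ ω, W ω ∂μ)
    (hq : 2 ≤ q) {β : ℝ} (hβ : 0 < β) :
    {s | s ∈ Icc (0 : ℝ) 1 ∧ statEq μ W q β s} =
      insert 0 ((· / (Real.exp β - 1)) '' {t | 0 < t ∧ Ffun μ W q t / t = (Real.exp β - 1)⁻¹}) := by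
  simp only [statEq_iff]
  exact setOf_apply_mul_eq_self Ffun_zero
    (fun t => (le_abs_self _).trans (abs_Ffun_le_one hWnn hWint hEW hq t))
    (sub_pos.2 (Real.one_lt_exp_iff.2 hβ))

end Ffun

theorem stationary_solutions_zero_field_general
    {Ω : Type*} [MeasurableSpace Ω] (μ : Measure Ω)
    (W : Ω → ℝ) (hWmeas : Measurable W) (hWnn : ∀ ω, 0 ≤ W ω)
    (hWint : Integrable W μ) (hEW : 0 < ∫ ω, W ω ∂μ)
    (hW2 : Integrable (fun ω => (W ω) ^ 2) μ)
    (q : ℕ) (hq : 3 ≤ q)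
    (tstar : ℝ) (htstar : 0 < tstar)
    (hconvex : ∀ t : ℝ, 0 < t → t < tstar → 0 < deriv (deriv (Ffun μ W q)) t)
    (hconcave : ∀ t : ℝ, tstar < t → deriv (deriv (Ffun μ W q)) t < 0) :
    ∃ β₀ β₁ : ℝ, 0 < β₀ ∧ β₀ < β₁ ∧
      (∀ β : ℝ, 0 < β → β < β₀ →
        {s : ℝ | s ∈ Icc (0 : ℝ) 1 ∧ statEq μ W q β s} = {0}) ∧
      (∀ β : ℝ, β₀ < β → β < β₁ → ∃ s₂ s₃ : ℝ, 0 < s₂ ∧ s₂ < s₃ ∧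
        {s : ℝ | s ∈ Icc (0 : ℝ) 1 ∧ statEq μ W q β s} = {0, s₂, s₃}) ∧
      (∀ β : ℝ, β₁ < β → ∃ s₃ : ℝ, 0 < s₃ ∧
        {s : ℝ | s ∈ Icc (0 : ℝ) 1 ∧ statEq μ W q β s} = {0, s₃}) := by
  have hq : 2 ≤ q := by omega
  have hF := hasDerivAt_Ffun hWmeas hWnn hWint hEW hW2 hq
  have hA0 := FfunDeriv_pos hWmeas hWnn hWint hEW hW2 hq 0
  have hA := tendsto_div_id_nhdsGT_zero (hF 0) Ffun_zero
  have hlim := tendsto_div_id_atTop_zero (abs_Ffun_le_one hWnn hWint hEW hq)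
  have hsol := fun β (hβ : 0 < β) => setOf_statEq_eq hWnn hWint hEW hq hβ
  rw [deriv_Ffun hWmeas hWnn hWint hEW hW2 hq] at hconvex hconcave
  obtain ⟨t₀, hφ⟩ := exists_isUnimodal_div_id htstar hF (continuous_FfunDeriv hWmeas hEW hW2 hq)
    Ffun_zero hA0 (fun t ht => hconvex t ht.1 ht.2) hconcave hlim
  have hAM := hφ.lt_apply_of_le_peak hA hφ.pos le_rfl
  have hM0 := hA0.trans hAM
  have hβ₀ := Real.log_pos (lt_add_of_pos_right 1 (inv_pos.2 hM0))
  have hβ₀₁ := Real.log_lt_log (by positivity) (add_lt_add_right ((inv_lt_inv₀ hM0 hA0).2 hAM) 1)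
  refine ⟨_, _, hβ₀, hβ₀₁, fun β hβ hββ₀ => ?_, fun β hβ₀β hβ₁ => ?_, fun β hβ₁ => ?_⟩
  · rw [hsol β hβ, hφ.setOf_apply_eq_eq_empty ((lt_inv_exp_sub_one_iff hβ hM0).2 hββ₀),
      image_empty, insert_empty_eq]
  · have hβ := hβ₀.trans hβ₀β
    obtain ⟨t₂, t₃, ht₂, ht₂₃, hset⟩ := hφ.exists_setOf_apply_eq_eq_pair hA hlim hA0
      ((lt_inv_exp_sub_one_iff hβ hA0).2 hβ₁) ((inv_exp_sub_one_lt_iff hβ hM0).2 hβ₀β)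
    have hb := sub_pos.2 (Real.one_lt_exp_iff.2 hβ)
    refine ⟨t₂ / (Real.exp β - 1), t₃ / (Real.exp β - 1), by positivity,
      div_lt_div_of_pos_right ht₂₃ hb, ?_⟩
    rw [hsol β hβ, hset, image_insert_eq, image_singleton]
  · have hβ := (hβ₀.trans hβ₀₁).trans hβ₁
    have hb := sub_pos.2 (Real.one_lt_exp_iff.2 hβ)
    obtain ⟨t₃, ht₃, hset⟩ := hφ.exists_setOf_apply_eq_eq_singleton hA hlim (inv_pos.2 hb)
      ((inv_exp_sub_one_lt_iff hβ hA0).2 hβ₁)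
    refine ⟨t₃ / (Real.exp β - 1), by positivity, ?_⟩
    rw [hsol β hβ, hset, image_singleton]

/-- **Stationary solutions in zero field**: under the unique zero-crossing condition,
there are `β₀ < β₁` so that the stationarity equation has one, three, or two
solutions in `[0,1]` according to the position of `β`. -/
theorem stationary_solutions_zero_field
    {Ω : Type*} [MeasurableSpace Ω] (μ : Measure Ω) [IsProbabilityMeasure μ]
    (W : Ω → ℝ) (hWmeas : Measurable W) (hWnn : ∀ ω, 0 ≤ W ω)
    (hWint : Integrable W μ) (hEW : 0 < ∫ ω, W ω ∂μ)
    (hW2 : Integrable (fun ω => (W ω) ^ 2) μ)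
    (q : ℕ) (hq : 3 ≤ q)
    (tstar : ℝ) (htstar : 0 < tstar)
    (hconvex : ∀ t : ℝ, 0 < t → t < tstar → 0 < deriv (deriv (Ffun μ W q)) t)
    (hconcave : ∀ t : ℝ, tstar < t → deriv (deriv (Ffun μ W q)) t < 0) :
    ∃ β₀ β₁ : ℝ, 0 < β₀ ∧ β₀ < β₁ ∧
      (∀ β : ℝ, 0 < β → β < β₀ →
        {s : ℝ | s ∈ Icc (0 : ℝ) 1 ∧ statEq μ W q β s} = {0}) ∧
      (∀ β : ℝ, β₀ < β → β < β₁ → ∃ s₂ s₃ : ℝ, 0 < s₂ ∧ s₂ < s₃ ∧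
        {s : ℝ | s ∈ Icc (0 : ℝ) 1 ∧ statEq μ W q β s} = {0, s₂, s₃}) ∧
      (∀ β : ℝ, β₁ < β → ∃ s₃ : ℝ, 0 < s₃ ∧
        {s : ℝ | s ∈ Icc (0 : ℝ) 1 ∧ statEq μ W q β s} = {0, s₃}) :=
  stationary_solutions_zero_field_general μ W hWmeas hWnn hWint hEW hW2 q hq tstar htstar hconvex
    hconcave
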